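/- If K is any set of Type III edges of G with |K| < m, then the class-homophily ratio does not decrease after removing K: hr_c' ≥ hr_c. -/
import Mathlib


open Finset

/-- `sameOn f e` is `true` iff the two endpoints of the edge `e` agree on the label `f`. -/
def sameOn {V : Type*} (f : V → Bool) : Sym2 V → Bool :=
  Sym2.lift ⟨fun u v => f u == f v, fun u v => by
    cases hu : f u <;> cases hv : f v <;> simp [hu, hv]⟩

/-- The number of edges in `E` whose endpoints agree on the binary label `f`. -/
def homCount {V : Type*} (E : Finset (Sym2 V)) (f : V → Bool) : ℕ :=
  (E.filter fun e => sameOn f e = true).card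

theorem typeIII_removal_hrc_nondecreasing {V : Type*} [Fintype V] [DecidableEq V]
    (G : SimpleGraph V) [DecidableRel G.Adj]
    (y s : V → Bool)
    (E : Finset (Sym2 V)) (hE : E = G.edgeFinset)
    (K : Finset (Sym2 V)) (hKE : K ⊆ E)
    (hKIII : ∀ e ∈ K, sameOn y e = false ∧ sameOn s e = true)
    (hm : 1 ≤ E.card) (hKlt : K.card < E.card) :
    (homCount E y : ℝ) / (E.card : ℝ) ≤ (homCount (E \ K) y : ℝ) / ((E.card : ℝ) - (K.card : ℝ)) := by
  have hcount : homCount (E \ K) y = homCount E y := by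
    unfold homCount
    congr 1
    apply Finset.ext
    intro e
    simp only [Finset.mem_filter, Finset.mem_sdiff]
    constructor
    · rintro ⟨⟨he, _⟩, hs⟩; exact ⟨he, hs⟩
    · rintro ⟨he, hs⟩
      refine ⟨⟨he, fun hk => ?_⟩, hs⟩
      have := (hKIII e hk).1
      rw [hs] at this; simp at this
  rw [hcount]
  have h1 : (0:ℝ) < (E.card : ℝ) - (K.card : ℝ) := by
    have : (K.card : ℝ) < (E.card : ℝ) := by exact_mod_cast hKlt
    linarith
  have h2 : (E.card : ℝ) - (K.card : ℝ) ≤ (E.card : ℝ) := by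
    have : (0:ℝ) ≤ (K.card : ℝ) := by positivity
    linarith
  exact div_le_div_of_nonneg_left (by positivity) h1 h2
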